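/- Let G be a deficiency-zero reaction network that is not weakly reversible. Then for any choice of positive rate constants k, the mass-action system (G,k) admits no positive equilibrium. -/

import Mathlib

/-- A reaction network with vertices in `ℤ_{≥0}^n` (encoded as `Fin n → ℕ`),
given by its finite set of directed edges. -/
abbrev ReactionEdges (n : ℕ) := Finset ((Fin n → ℕ) × (Fin n → ℕ))

/-- The vertex set: all sources and targets of edges. -/
noncomputable def vertexSet {n : ℕ} (E : ReactionEdges n) : Finset (Fin n → ℕ) :=
  E.image Prod.fst ∪ E.image Prod.snd

/-- The reaction vector `y' - y ∈ ℝ^n` of an edge `y → y'`. -/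
def reactionVector {n : ℕ} (e : (Fin n → ℕ) × (Fin n → ℕ)) : Fin n → ℝ :=
  fun i => (e.2 i : ℝ) - (e.1 i : ℝ)

/-- The stoichiometric subspace: the span of all reaction vectors. -/
noncomputable def stoichSubspace {n : ℕ} (E : ReactionEdges n) :
    Submodule ℝ (Fin n → ℝ) :=
  Submodule.span ℝ { v | ∃ e ∈ E, v = reactionVector e }

/-- The number of linkage classes: the number of connected components of the
underlying undirected graph on the vertex set. -/
noncomputable def numLinkageClasses {n : ℕ} (E : ReactionEdges n) : ℕ :=
  Nat.card (Quotient (Relation.EqvGen.setoid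
    (fun a b : {v // v ∈ vertexSet E} => ((a : Fin n → ℕ), (b : Fin n → ℕ)) ∈ E)))

/-- `G` is weakly reversible iff every edge lies on a directed cycle, i.e. for
every edge `y → y'` there is a directed path from `y'` back to `y`. -/
def WeaklyReversible {n : ℕ} (E : ReactionEdges n) : Prop :=
  ∀ e ∈ E, Relation.ReflTransGen (fun a b => (a, b) ∈ E) e.2 e.1

/-- The mass-action vector field `f_k(x) = ∑_{y→y'∈E} k_{y→y'} x^y (y' - y)`. -/
noncomputable def massActionField {n : ℕ} (E : ReactionEdges n)
    (k : (Fin n → ℕ) × (Fin n → ℕ) → ℝ) (x : Fin n → ℝ) : Fin n → ℝ :=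
  ∑ e ∈ E, (k e * ∏ i, x i ^ e.1 i) • reactionVector e

/-!
Encode a network by the vectors `ω_{y'} - ω_y ∈ ℝ^V` of its edges and let `Y : ℝ^V → ℝⁿ` send
`ω_y` to the complex `y`. The span `Δ` of the edge vectors lies in the kernel of the map summing
coordinates over each linkage class, so `dim Δ ≤ |V| - ℓ`, while `Y` maps `Δ` onto the
stoichiometric subspace. Deficiency zero therefore makes `Y` injective on `Δ`. At a positive
equilibrium `x` the flux vector `∑ k_e x^{y_e} (ω_{y'} - ω_y) ∈ Δ` is killed by `Y`, hence
vanishes: every complex has equal in- and out-flow. Summed over the set of complexes reachable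
from the head of an edge, which no edge leaves, this forces every edge entering that set to carry
zero flux, so the tail of each edge is reachable from its head.
-/

open Finsupp Module Relation Submodule

section EdgeVectors

variable {α : Type*} (R : Type*) [Ring R]

noncomputable def edgeVector (e : α × α) : α →₀ R :=
  single e.2 1 - single e.1 1

noncomputable def edgeSpan (E : Finset (α × α)) : Submodule R (α →₀ R) :=
  span R (edgeVector R '' (E : Set (α × α)))

instance (E : Finset (α × α)) : Module.Finite R (edgeSpan R E) :=
  Module.Finite.span_of_finite R (E.finite_toSet.image _)

variable {R}

lemma mapDomain_edgeVector {β : Type*} (f : α → β) (e : α × α) :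
    mapDomain f (edgeVector R e) = edgeVector R (f e.1, f e.2) := by
  simp only [edgeVector, mapDomain_sub, mapDomain_single]

lemma linearCombination_edgeVector {M : Type*} [AddCommGroup M] [Module R M] (v : α → M)
    (e : α × α) : linearCombination R v (edgeVector R e) = v e.2 - v e.1 := by
  simp only [edgeVector, map_sub, linearCombination_single, one_smul]

end EdgeVectors

theorem finrank_span_edgeVector_add_card_quotient_le {ι K : Type*} [Fintype ι]
    [DivisionRing K] (r : ι → ι → Prop) :
    finrank K (span K (edgeVector K '' {p : ι × ι | r p.1 p.2}))
      + Nat.card (Quotient (EqvGen.setoid r)) ≤ Fintype.card ι := by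
  let _ : Fintype (Quotient (EqvGen.setoid r)) := Fintype.ofFinite _
  let σ := lmapDomain K K (Quotient.mk (EqvGen.setoid r))
  have hσ : LinearMap.range σ = ⊤ :=
    LinearMap.range_eq_top.2 (mapDomain_surjective Quotient.mk_surjective)
  have hspan_le : span K (edgeVector K '' {p : ι × ι | r p.1 p.2}) ≤ LinearMap.ker σ := by
    refine span_le.2 ?_
    rintro _ ⟨p, hp, rfl⟩
    have hclass : Quotient.mk (EqvGen.setoid r) p.1 = Quotient.mk _ p.2 :=
      Quotient.sound (EqvGen.rel _ _ hp)
    rw [SetLike.mem_coe, LinearMap.mem_ker, lmapDomain_apply, mapDomain_edgeVector, edgeVector,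
      hclass, sub_self]
  have hrank := LinearMap.finrank_range_add_finrank_ker σ
  rw [hσ, finrank_top, finrank_finsupp_self, finrank_finsupp_self] at hrank
  have := Submodule.finrank_mono hspan_le
  rw [Nat.card_eq_fintype_card]
  omega

theorem reflTransGen_of_sum_smul_edgeVector_eq_zero {α K : Type*} [Ring K] [LinearOrder K]
    [IsStrictOrderedRing K] {E : Finset (α × α)} {c : α × α → K} (hc : ∀ e ∈ E, 0 < c e)
    (hbalance : ∑ e ∈ E, c e • edgeVector K e = 0) {e₀ : α × α} (he₀ : e₀ ∈ E) :
    ReflTransGen (fun a b => (a, b) ∈ E) e₀.2 e₀.1 := by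
  classical
  by_contra hback
  let reach : Set α := {v | ReflTransGen (fun a b => (a, b) ∈ E) e₀.2 v}
  let φ : (α →₀ K) →ₗ[K] K := linearCombination K (fun v => if v ∈ reach then 1 else 0)
  -- `reach` is closed under edges, so `φ` does not decrease along any edge.
  have hterm_nonneg : ∀ e ∈ E, 0 ≤ c e * φ (edgeVector K e) := by
    intro e he
    refine mul_nonneg (hc e he).le ?_
    rw [linearCombination_edgeVector]
    by_cases h₁ : e.1 ∈ reach
    · simp [h₁, show e.2 ∈ reach from ReflTransGen.tail h₁ he]
    · split_ifs <;> norm_num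
  have hsum : ∑ e ∈ E, c e * φ (edgeVector K e) = 0 := by
    simpa only [map_sum, map_smul, smul_eq_mul, map_zero] using congrArg φ hbalance
  have hzero := (Finset.sum_eq_zero_iff_of_nonneg hterm_nonneg).1 hsum e₀ he₀
  have hhead : e₀.2 ∈ reach := ReflTransGen.refl
  have htail : e₀.1 ∉ reach := hback
  rw [linearCombination_edgeVector, if_pos hhead, if_neg htail, sub_zero, mul_one] at hzero
  exact (hc e₀ he₀).ne' hzero

section ReactionNetworks

variable {n : ℕ}

/-- The map `Y` of chemical reaction network theory, sending the basis vector of a complex to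
the complex itself. -/
noncomputable def complexMap (n : ℕ) : ((Fin n → ℕ) →₀ ℝ) →ₗ[ℝ] (Fin n → ℝ) :=
  linearCombination ℝ (fun y i => (y i : ℝ))

lemma complexMap_edgeVector (e : (Fin n → ℕ) × (Fin n → ℕ)) :
    complexMap n (edgeVector ℝ e) = reactionVector e := by
  rw [complexMap, linearCombination_edgeVector]
  rfl

lemma map_complexMap_edgeSpan (E : ReactionEdges n) :
    (edgeSpan ℝ E).map (complexMap n) = stoichSubspace E := by
  rw [edgeSpan, map_span, stoichSubspace, ← Set.image_comp]
  congr 1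
  ext v
  simp [complexMap_edgeVector, eq_comm]

lemma massActionField_eq_complexMap (E : ReactionEdges n)
    (k : (Fin n → ℕ) × (Fin n → ℕ) → ℝ) (x : Fin n → ℝ) :
    massActionField E k x
      = complexMap n (∑ e ∈ E, (k e * ∏ i, x i ^ e.1 i) • edgeVector ℝ e) := by
  simp only [massActionField, map_sum, map_smul, complexMap_edgeVector]

lemma finrank_edgeSpan_add_numLinkageClasses_le (E : ReactionEdges n) :
    finrank ℝ (edgeSpan ℝ E) + numLinkageClasses E ≤ (vertexSet E).card := by
  let r (a b : {v // v ∈ vertexSet E}) : Prop := (a.1, b.1) ∈ E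
  have hle : edgeSpan ℝ E ≤ (span ℝ (edgeVector ℝ '' {p | r p.1 p.2})).map
      (lmapDomain ℝ ℝ Subtype.val) := by
    refine span_le.2 ?_
    rintro _ ⟨e, he, rfl⟩
    have hfst : e.1 ∈ vertexSet E := Finset.mem_union_left _ (Finset.mem_image_of_mem _ he)
    have hsnd : e.2 ∈ vertexSet E := Finset.mem_union_right _ (Finset.mem_image_of_mem _ he)
    exact ⟨edgeVector ℝ (⟨e.1, hfst⟩, ⟨e.2, hsnd⟩), subset_span ⟨_, he, rfl⟩,
      mapDomain_edgeVector _ _⟩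
  have hspan := finrank_span_edgeVector_add_card_quotient_le (K := ℝ) r
  rw [Fintype.card_coe] at hspan
  have := (Submodule.finrank_mono hle).trans (Submodule.finrank_map_le _ _)
  change _ + Nat.card (Quotient (EqvGen.setoid r)) ≤ _
  omega

end ReactionNetworks

theorem no_positive_equilibrium_of_deficiency_zero_not_weaklyReversible_general
    (n : ℕ) (E : ReactionEdges n)
    (hdef : (vertexSet E).card
      = numLinkageClasses E + Module.finrank ℝ (stoichSubspace E))
    (hnwr : ¬ WeaklyReversible E)
    (k : (Fin n → ℕ) × (Fin n → ℕ) → ℝ) (hk : ∀ e ∈ E, 0 < k e) :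
    ¬ ∃ x : Fin n → ℝ, (∀ i, 0 < x i) ∧ massActionField E k x = 0 := by
  rintro ⟨x, hx, hfx⟩
  set c : (Fin n → ℕ) × (Fin n → ℕ) → ℝ := fun e => k e * ∏ i, x i ^ e.1 i
  have hc : ∀ e ∈ E, 0 < c e := fun e he =>
    mul_pos (hk e he) (Finset.prod_pos fun i _ => pow_pos (hx i) _)
  have hdisj : Disjoint (edgeSpan ℝ E) (LinearMap.ker (complexMap n)) := by
    refine Submodule.disjoint_ker_of_finrank_le _ ?_
    rw [map_complexMap_edgeSpan]
    have := finrank_edgeSpan_add_numLinkageClasses_le E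
    omega
  have hflux : ∑ e ∈ E, c e • edgeVector ℝ e = 0 :=
    (Submodule.disjoint_def.1 hdisj) _
      (Submodule.sum_mem _ fun e he => Submodule.smul_mem _ _ (subset_span ⟨e, he, rfl⟩))
      (by rw [LinearMap.mem_ker, ← massActionField_eq_complexMap, hfx])
  exact hnwr fun e he => reflTransGen_of_sum_smul_edgeVector_eq_zero hc hflux he

/-- **Deficiency-zero networks that are not weakly reversible have no positive
equilibrium.** If `G` has deficiency zero, i.e.
`|V| = ℓ + dim S_G`, and is not weakly reversible, then for every choice of
positive rate constants `k` the mass-action system `(G, k)` has no equilibrium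
in the open positive orthant. -/
theorem no_positive_equilibrium_of_deficiency_zero_not_weaklyReversible
    (n : ℕ) (E : ReactionEdges n)
    (hNoLoop : ∀ e ∈ E, e.1 ≠ e.2)
    (hdef : (vertexSet E).card
      = numLinkageClasses E + Module.finrank ℝ (stoichSubspace E))
    (hnwr : ¬ WeaklyReversible E)
    (k : (Fin n → ℕ) × (Fin n → ℕ) → ℝ) (hk : ∀ e ∈ E, 0 < k e) :
    ¬ ∃ x : Fin n → ℝ, (∀ i, 0 < x i) ∧ massActionField E k x = 0 :=
  no_positive_equilibrium_of_deficiency_zero_not_weaklyReversible_general n E hdef hnwr k hk
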